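/- arXiv:math/9809060 — 4 statements merged into one kernel-verified Lean document; each statement's English description precedes it below -/
import Mathlib

section
/- Let P ∈ ℚ[t] be a polynomial. Then P preserves formal sums of signs if and only if P can be written as P = Σ_{p=0}^N n_p f_p where each n_p is an integer divisible by 2^{⌊p/2⌋}. -/
open Polynomial

/-- The integer-valued sign of a real number. -/
noncomputable def sgn (r : ℝ) : ℤ := if r < 0 then -1 else if 0 < r then 1 else 0

/-- A polynomial `P ∈ ℚ[t]` preserves formal sums of signs if for every `s ≥ 0` there is
a polynomial `Q` with integer coefficients in `s` variables such that
`P(X_1 + ⋯ + X_s) − Q` lies in the ideal generated by the `X_i^3 − X_i`. -/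
def PreservesSumsOfSigns (P : Polynomial ℚ) : Prop :=
  ∀ s : ℕ, ∃ Q : MvPolynomial (Fin s) ℤ,
    Polynomial.aeval (∑ i : Fin s, MvPolynomial.X i) P
        - MvPolynomial.map (Int.castRingHom ℚ) Q ∈
      Ideal.span (Set.range fun i : Fin s => MvPolynomial.X i ^ 3 - MvPolynomial.X i)

/-- The `p`-th binomial polynomial `f_p(t) = t(t−1)⋯(t−p+1)/p!`. -/
noncomputable def binomPoly (p : ℕ) : Polynomial ℚ :=
  ((p.factorial : ℚ)⁻¹) • descPochhammer ℚ p

/-!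
If `x ^ 3 = x`, then `P(a + x) = P(a) + (b P)(a) x + (c P)(a) x ^ 2`, where
`b P = (P(t + 1) - P(t - 1)) / 2` and `c P = (P(t + 1) + P(t - 1)) / 2 - P`. Splitting off one
sign, `P` is integral on sums of `s + 1` signs as soon as `P`, `b P` and `c P` are integral on
sums of `s` signs; conversely, substituting `1`, `-1`, `0` for that sign shows that `b P` and `c P`
inherit integrality, the halving being harmless because `Q(1, ·) ≡ Q(-1, ·) mod 2` for every
integer polynomial `Q`. For `s = 0` integrality just means `P(0) ∈ ℤ`.

Since `c f_(p+2) = f_p(t - 1) / 2` and `b + c = Δ` with `Δ f_(p+1) = f_p`, the lattice spanned by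
the `2 ^ ⌊p/2⌋ f_p` is stable under `b` and `c`, so it consists of polynomials preserving sums
of signs. Conversely, `c ^ m` (for `n = 2m`) and `c ^ m b` (for `n = 2m + 1`) kill `f_p` for
`p < n` and send `f_n` to `2 ^ (-⌊n/2⌋)`, so the coefficient of `f_n` in a preserving polynomial
of degree `n` is an integer multiple of `2 ^ ⌊n/2⌋`; subtracting that term, induct on the degree.
-/

lemma binomPoly_zero : binomPoly 0 = 1 := by simp [binomPoly]

lemma degree_binomPoly (p : ℕ) : (binomPoly p).degree = p := by
  rw [binomPoly, smul_eq_C_mul, degree_C_mul (by positivity),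
    degree_eq_natDegree (monic_descPochhammer ℚ p).ne_zero, descPochhammer_natDegree]

lemma eval_zero_binomPoly_succ (p : ℕ) : (binomPoly (p + 1)).eval 0 = 0 := by
  simp [binomPoly, descPochhammer_succ_left]

lemma taylor_one_binomPoly_succ (p : ℕ) :
    taylor 1 (binomPoly (p + 1)) = binomPoly (p + 1) + binomPoly p := by
  have shift : taylor 1 (descPochhammer ℚ (p + 1)) = (X + 1) * descPochhammer ℚ p := by
    rw [descPochhammer_succ_left, taylor_mul, taylor_X, taylor_apply, comp_assoc]
    simp
  have hdiff : (X + 1) * descPochhammer ℚ p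
      = descPochhammer ℚ p * (X - (p : ℚ[X])) + ((p : ℚ) + 1) • descPochhammer ℚ p := by
    rw [smul_eq_C_mul, map_add, map_natCast, map_one]
    ring
  simp only [binomPoly]
  rw [map_smul, shift, hdiff, descPochhammer_succ_right, smul_add, smul_smul,
    Nat.factorial_succ]
  congr 2
  push_cast
  field_simp

lemma taylor_neg_one_binomPoly_succ (p : ℕ) :
    taylor (-1) (binomPoly (p + 1)) = binomPoly (p + 1) - taylor (-1) (binomPoly p) := by
  have h := congrArg (taylor (-1)) (taylor_one_binomPoly_succ p)
  rw [taylor_taylor, neg_add_cancel, taylor_zero, map_add] at h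
  exact eq_sub_of_add_eq h.symm

noncomputable def binomSequence : Polynomial.Sequence ℚ := ⟨binomPoly, degree_binomPoly⟩

lemma span_binomPoly_Iio (n : ℕ) :
    Submodule.span ℚ (binomPoly '' Set.Iio n) = degreeLT ℚ n :=
  binomSequence.span_degreeLT fun i _ =>
    (leadingCoeff_ne_zero.mpr (binomSequence.ne_zero i)).isUnit

noncomputable def centralDiff : Module.End ℚ ℚ[X] := (2 : ℚ)⁻¹ • (taylor 1 - taylor (-1))

noncomputable def halfSecondDiff : Module.End ℚ ℚ[X] :=
  (2 : ℚ)⁻¹ • (taylor 1 + taylor (-1)) - 1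

lemma halfSecondDiff_apply (P : ℚ[X]) :
    halfSecondDiff P = (2 : ℚ)⁻¹ • (taylor 1 P + taylor (-1) P) - P :=
  rfl

lemma centralDiff_apply (P : ℚ[X]) :
    centralDiff P = taylor 1 P - P - halfSecondDiff P := by
  rw [halfSecondDiff_apply]
  simp only [centralDiff, LinearMap.smul_apply, LinearMap.sub_apply]
  module

lemma halfSecondDiff_commute_taylor (r : ℚ) : Commute halfSecondDiff (taylor r) :=
  LinearMap.ext fun P => by
    simp [halfSecondDiff, taylor_taylor, add_comm r]

lemma halfSecondDiff_pow_taylor (m : ℕ) (r : ℚ) (P : ℚ[X]) :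
    (halfSecondDiff ^ m) (taylor r P) = taylor r ((halfSecondDiff ^ m) P) :=
  LinearMap.congr_fun ((halfSecondDiff_commute_taylor r).pow_left m).eq P

lemma halfSecondDiff_binomPoly_zero : halfSecondDiff (binomPoly 0) = 0 := by
  rw [halfSecondDiff_apply, binomPoly_zero, taylor_one, taylor_one, C_1]
  module

lemma halfSecondDiff_binomPoly_one : halfSecondDiff (binomPoly 1) = 0 := by
  rw [halfSecondDiff_apply, taylor_one_binomPoly_succ, taylor_neg_one_binomPoly_succ,
    binomPoly_zero, taylor_one, C_1]
  module

lemma halfSecondDiff_binomPoly_add_two (p : ℕ) :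
    halfSecondDiff (binomPoly (p + 2)) = (2 : ℚ)⁻¹ • taylor (-1) (binomPoly p) := by
  rw [halfSecondDiff_apply, taylor_one_binomPoly_succ, taylor_neg_one_binomPoly_succ,
    taylor_neg_one_binomPoly_succ]
  module

lemma halfSecondDiff_pow_binomPoly_add (m p : ℕ) :
    (halfSecondDiff ^ m) (binomPoly (p + 2 * m)) =
      ((2 : ℚ) ^ m)⁻¹ • taylor (-m : ℚ) (binomPoly p) := by
  induction m with
  | zero => simp
  | succ m ih =>
    rw [pow_succ, Module.End.mul_apply, show p + 2 * (m + 1) = p + 2 * m + 2 by ring,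
      halfSecondDiff_binomPoly_add_two, map_smul, halfSecondDiff_pow_taylor, ih, map_smul,
      taylor_taylor, smul_smul, pow_succ, mul_inv]
    push_cast
    ring_nf

lemma halfSecondDiff_pow_binomPoly_of_lt {m p : ℕ} (h : p < 2 * m) :
    (halfSecondDiff ^ m) (binomPoly p) = 0 := by
  induction m generalizing p with
  | zero => omega
  | succ m ih =>
    rw [pow_succ, Module.End.mul_apply]
    match p with
    | 0 => rw [halfSecondDiff_binomPoly_zero, map_zero]
    | 1 => rw [halfSecondDiff_binomPoly_one, map_zero]
    | q + 2 =>
      rw [halfSecondDiff_binomPoly_add_two, map_smul, halfSecondDiff_pow_taylor, ih (by omega),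
        map_zero, smul_zero]

lemma centralDiff_binomPoly_zero : centralDiff (binomPoly 0) = 0 := by
  rw [centralDiff_apply, halfSecondDiff_binomPoly_zero, binomPoly_zero, taylor_one, C_1,
    sub_self, sub_zero]

lemma centralDiff_binomPoly_succ (p : ℕ) :
    centralDiff (binomPoly (p + 1)) = binomPoly p - halfSecondDiff (binomPoly (p + 1)) := by
  rw [centralDiff_apply, taylor_one_binomPoly_succ, add_sub_cancel_left]

noncomputable def binomCoeffOp (n : ℕ) : Module.End ℚ ℚ[X] :=
  halfSecondDiff ^ (n / 2) * centralDiff ^ (n % 2)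

lemma binomCoeffOp_two_mul (m : ℕ) : binomCoeffOp (2 * m) = halfSecondDiff ^ m := by
  rw [binomCoeffOp, Nat.mul_div_cancel_left m two_pos, Nat.mul_mod_right, pow_zero, mul_one]

lemma binomCoeffOp_two_mul_add_one (m : ℕ) :
    binomCoeffOp (2 * m + 1) = halfSecondDiff ^ m * centralDiff := by
  rw [binomCoeffOp, show (2 * m + 1) / 2 = m by omega, show (2 * m + 1) % 2 = 1 by omega, pow_one]

lemma binomCoeffOp_binomPoly_of_lt {n p : ℕ} (h : p < n) : binomCoeffOp n (binomPoly p) = 0 := by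
  obtain ⟨m, rfl | rfl⟩ := Nat.even_or_odd' n
  · rw [binomCoeffOp_two_mul, halfSecondDiff_pow_binomPoly_of_lt h]
  · rw [binomCoeffOp_two_mul_add_one, Module.End.mul_apply]
    match p with
    | 0 => rw [centralDiff_binomPoly_zero, map_zero]
    | q + 1 =>
      rw [centralDiff_binomPoly_succ, map_sub, ← Module.End.mul_apply, ← pow_succ,
        halfSecondDiff_pow_binomPoly_of_lt (by omega),
        halfSecondDiff_pow_binomPoly_of_lt (by omega), sub_zero]

lemma binomCoeffOp_binomPoly_self (n : ℕ) :
    binomCoeffOp n (binomPoly n) = C ((2 : ℚ) ^ (n / 2))⁻¹ := by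
  have even (m : ℕ) : (halfSecondDiff ^ m) (binomPoly (2 * m)) = C ((2 : ℚ) ^ m)⁻¹ := by
    simpa [binomPoly_zero, smul_eq_C_mul] using halfSecondDiff_pow_binomPoly_add m 0
  obtain ⟨m, rfl | rfl⟩ := Nat.even_or_odd' n
  · rw [binomCoeffOp_two_mul, Nat.mul_div_cancel_left m two_pos, even]
  · rw [binomCoeffOp_two_mul_add_one, show (2 * m + 1) / 2 = m by omega, Module.End.mul_apply,
      centralDiff_binomPoly_succ, map_sub, ← Module.End.mul_apply, ← pow_succ,
      halfSecondDiff_pow_binomPoly_of_lt (m := m + 1) (by omega), sub_zero, even]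

noncomputable def binomLattice : Submodule ℤ ℚ[X] :=
  Submodule.span ℤ (Set.range fun p => (2 : ℚ) ^ (p / 2) • binomPoly p)

lemma smul_binomPoly_mem_binomLattice (p : ℕ) :
    (2 : ℚ) ^ (p / 2) • binomPoly p ∈ binomLattice :=
  Submodule.subset_span ⟨p, rfl⟩

lemma map_mem_binomLattice {T : Module.End ℚ ℚ[X]}
    (hT : ∀ p, T ((2 : ℚ) ^ (p / 2) • binomPoly p) ∈ binomLattice) {P : ℚ[X]}
    (hP : P ∈ binomLattice) : T P ∈ binomLattice :=
  (Submodule.span_le (p := binomLattice.comap (T.restrictScalars ℤ)) |>.mpr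
    (Set.range_subset_iff.mpr hT)) hP

lemma taylor_neg_one_mem_binomLattice {P : ℚ[X]} (hP : P ∈ binomLattice) :
    taylor (-1) P ∈ binomLattice := by
  refine map_mem_binomLattice (fun p => ?_) hP
  induction p with
  | zero => simpa [binomPoly_zero] using smul_binomPoly_mem_binomLattice 0
  | succ p ih =>
    obtain ⟨k, hk⟩ : ∃ k, (p + 1) / 2 = p / 2 + k :=
      Nat.exists_eq_add_of_le (Nat.div_le_div_right p.le_succ)
    have key : taylor (-1) ((2 : ℚ) ^ ((p + 1) / 2) • binomPoly (p + 1)) =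
        (2 : ℚ) ^ ((p + 1) / 2) • binomPoly (p + 1) -
          (2 ^ k : ℤ) • taylor (-1) ((2 : ℚ) ^ (p / 2) • binomPoly p) := by
      rw [map_smul, taylor_neg_one_binomPoly_succ, map_smul, hk, pow_add]
      module
    rw [key]
    exact sub_mem (smul_binomPoly_mem_binomLattice _) (zsmul_mem ih _)

lemma halfSecondDiff_mem_binomLattice {P : ℚ[X]} (hP : P ∈ binomLattice) :
    halfSecondDiff P ∈ binomLattice := by
  refine map_mem_binomLattice (fun p => ?_) hP
  match p with
  | 0 => simp [halfSecondDiff_binomPoly_zero]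
  | 1 => simp [halfSecondDiff_binomPoly_one]
  | p + 2 =>
    have key : halfSecondDiff ((2 : ℚ) ^ ((p + 2) / 2) • binomPoly (p + 2)) =
        taylor (-1) ((2 : ℚ) ^ (p / 2) • binomPoly p) := by
      rw [map_smul, halfSecondDiff_binomPoly_add_two, map_smul, Nat.add_div_right p two_pos,
        pow_succ]
      module
    rw [key]
    exact taylor_neg_one_mem_binomLattice (smul_binomPoly_mem_binomLattice p)

lemma centralDiff_mem_binomLattice {P : ℚ[X]} (hP : P ∈ binomLattice) :
    centralDiff P ∈ binomLattice := by
  refine map_mem_binomLattice (fun p => ?_) hP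
  match p with
  | 0 => simp [centralDiff_binomPoly_zero]
  | p + 1 =>
    obtain ⟨k, hk⟩ : ∃ k, (p + 1) / 2 = p / 2 + k :=
      Nat.exists_eq_add_of_le (Nat.div_le_div_right p.le_succ)
    have key : centralDiff ((2 : ℚ) ^ ((p + 1) / 2) • binomPoly (p + 1)) =
        (2 ^ k : ℤ) • ((2 : ℚ) ^ (p / 2) • binomPoly p) -
          halfSecondDiff ((2 : ℚ) ^ ((p + 1) / 2) • binomPoly (p + 1)) := by
      rw [map_smul, centralDiff_binomPoly_succ, map_smul, hk, pow_add]
      module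
    rw [key]
    exact sub_mem (zsmul_mem (smul_binomPoly_mem_binomLattice p) _)
      (halfSecondDiff_mem_binomLattice (smul_binomPoly_mem_binomLattice _))

lemma exists_intCast_eq_eval_zero {P : ℚ[X]} (hP : P ∈ binomLattice) :
    ∃ z : ℤ, P.eval 0 = z := by
  have hle : binomLattice ≤
      (Submodule.span ℤ {(1 : ℚ)}).comap ((leval (0 : ℚ)).restrictScalars ℤ) := by
    refine Submodule.span_le.mpr (Set.range_subset_iff.mpr fun p => ?_)
    rcases p with _ | p
    · simp [binomPoly_zero]
    · simp [eval_zero_binomPoly_succ]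
  obtain ⟨z, hz⟩ := Submodule.mem_span_singleton.mp (hle hP)
  exact ⟨z, by simpa using hz.symm⟩

lemma mem_binomLattice_iff (P : ℚ[X]) :
    P ∈ binomLattice ↔ ∃ (N : ℕ) (n : ℕ → ℤ), (∀ p, (2 : ℤ) ^ (p / 2) ∣ n p) ∧
      P = ∑ p ∈ Finset.range (N + 1), (n p : ℚ) • binomPoly p := by
  have term (p : ℕ) (z : ℤ) :
      (((2 : ℤ) ^ (p / 2) * z : ℤ) : ℚ) • binomPoly p =
        z • ((2 : ℚ) ^ (p / 2) • binomPoly p) := by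
    rw [← Int.cast_smul_eq_zsmul ℚ, smul_smul]
    push_cast
    ring_nf
  constructor
  · intro hP
    obtain ⟨c, rfl⟩ := Finsupp.mem_span_range_iff_exists_finsupp.mp hP
    refine ⟨c.support.sup id, fun p => 2 ^ (p / 2) * c p, fun p => dvd_mul_right _ _, ?_⟩
    rw [Finsupp.sum_of_support_subset c (Finset.subset_range_sup_succ _)
      (fun p a => a • ((2 : ℚ) ^ (p / 2) • binomPoly p)) fun _ _ => zero_smul _ _]
    exact Finset.sum_congr rfl fun p _ => (term p (c p)).symm
  · rintro ⟨N, n, hn, rfl⟩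
    refine Submodule.sum_mem _ fun p _ => ?_
    obtain ⟨z, hz⟩ := hn p
    rw [hz, term]
    exact zsmul_mem (smul_binomPoly_mem_binomLattice p) z

section Evaluation

variable {A : Type*} [CommRing A] [Algebra ℚ A]

lemma aeval_taylor (a : A) (r : ℚ) (P : ℚ[X]) :
    aeval a (taylor r P) = aeval (a + algebraMap ℚ A r) P := by
  rw [taylor_apply, aeval_comp, map_add, aeval_X, aeval_C]

lemma aeval_centralDiff (a : A) (P : ℚ[X]) :
    aeval a (centralDiff P) = (2⁻¹ : ℚ) • (aeval (a + 1) P - aeval (a - 1) P) := by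
  simp [centralDiff, aeval_taylor, sub_eq_add_neg]

lemma aeval_halfSecondDiff (a : A) (P : ℚ[X]) :
    aeval a (halfSecondDiff P) =
      (2⁻¹ : ℚ) • (aeval (a + 1) P + aeval (a - 1) P) - aeval a P := by
  simp [halfSecondDiff_apply, aeval_taylor, sub_eq_add_neg]

theorem aeval_add_of_pow_three_eq_self {x : A} (hx : x ^ 3 = x) (a : A) (P : ℚ[X]) :
    aeval (a + x) P =
      aeval a P + aeval a (centralDiff P) * x + aeval a (halfSecondDiff P) * x ^ 2 := by
  rw [aeval_centralDiff, aeval_halfSecondDiff, Algebra.smul_def, Algebra.smul_def]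
  set h := algebraMap ℚ A 2⁻¹
  have h2 : h * 2 = 1 := by rw [← map_ofNat (algebraMap ℚ A) 2, ← map_mul]; norm_num
  induction P using Polynomial.induction_on with
  | C r => simp only [aeval_C]; linear_combination -(algebraMap ℚ A r * x ^ 2 * h2)
  | add p q hp hq => simp only [map_add]; linear_combination hp + hq
  | monomial n r ih =>
    simp only [pow_succ, ← mul_assoc, map_mul, map_pow, aeval_X, aeval_C] at ih ⊢
    linear_combination (a + x) * ih + (h * (algebraMap ℚ A r * (a + 1) ^ n +
      algebraMap ℚ A r * (a - 1) ^ n) - algebraMap ℚ A r * a ^ n) * hx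

end Evaluation

noncomputable def signSum (s : ℕ) : MvPolynomial (Fin s) ℚ := ∑ i, MvPolynomial.X i

noncomputable def signIdeal (s : ℕ) : Ideal (MvPolynomial (Fin s) ℚ) :=
  Ideal.span (Set.range fun i : Fin s => MvPolynomial.X i ^ 3 - MvPolynomial.X i)

lemma X_pow_three_sub_X_mem_signIdeal {s : ℕ} (i : Fin s) :
    MvPolynomial.X i ^ 3 - MvPolynomial.X i ∈ signIdeal s :=
  Ideal.subset_span ⟨i, rfl⟩

def PreservesSumsOfSignsAt (s : ℕ) (P : ℚ[X]) : Prop :=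
  ∃ Q : MvPolynomial (Fin s) ℤ,
    aeval (signSum s) P - MvPolynomial.map (Int.castRingHom ℚ) Q ∈ signIdeal s

lemma PreservesSumsOfSignsAt.sub {s : ℕ} {P R : ℚ[X]} (hP : PreservesSumsOfSignsAt s P)
    (hR : PreservesSumsOfSignsAt s R) : PreservesSumsOfSignsAt s (P - R) := by
  obtain ⟨Q, hQ⟩ := hP
  obtain ⟨Q', hQ'⟩ := hR
  exact ⟨Q - Q', by simpa only [map_sub, sub_sub_sub_comm] using sub_mem hQ hQ'⟩

lemma preservesSumsOfSignsAt_zero_iff {P : ℚ[X]} :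
    PreservesSumsOfSignsAt 0 P ↔ ∃ z : ℤ, P.eval 0 = z := by
  have hI : signIdeal 0 = ⊥ := by simp [signIdeal]
  simp only [PreservesSumsOfSignsAt, signSum, Finset.univ_eq_empty, Finset.sum_empty, hI,
    Ideal.mem_bot, sub_eq_zero, ← coeff_zero_eq_aeval_zero', coeff_zero_eq_eval_zero]
  constructor
  · rintro ⟨Q, hQ⟩
    refine ⟨MvPolynomial.constantCoeff Q, ?_⟩
    simpa using congrArg MvPolynomial.constantCoeff hQ
  · rintro ⟨z, hz⟩
    exact ⟨MvPolynomial.C z, by simp [hz, MvPolynomial.algebraMap_eq]⟩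

lemma signIdeal_le_comap {s t : ℕ}
    (f : MvPolynomial (Fin s) ℚ →ₐ[ℚ] MvPolynomial (Fin t) ℚ)
    (hf : ∀ i, f (MvPolynomial.X i) ^ 3 - f (MvPolynomial.X i) ∈ signIdeal t) :
    signIdeal s ≤ (signIdeal t).comap f :=
  Ideal.span_le.mpr <| Set.range_subset_iff.mpr fun i => by simpa using hf i

lemma aeval_mkₐ_eq_of_mem_signIdeal {s t : ℕ}
    {f : MvPolynomial (Fin s) ℚ →ₐ[ℚ] MvPolynomial (Fin t) ℚ}
    (hf : signIdeal s ≤ (signIdeal t).comap f) {P : ℚ[X]} {Q : MvPolynomial (Fin s) ℤ}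
    (hQ : aeval (signSum s) P - MvPolynomial.map (Int.castRingHom ℚ) Q ∈ signIdeal s) :
    aeval (Ideal.Quotient.mkₐ ℚ (signIdeal t) (f (signSum s))) P =
      Ideal.Quotient.mkₐ ℚ (signIdeal t) (f (MvPolynomial.map (Int.castRingHom ℚ) Q)) := by
  rw [aeval_algHom_apply, aeval_algHom_apply, Ideal.Quotient.mkₐ_eq_mk, Ideal.Quotient.eq,
    ← map_sub]
  exact hf hQ

theorem PreservesSumsOfSignsAt.succ {s : ℕ} {P : ℚ[X]} (hP : PreservesSumsOfSignsAt s P)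
    (hb : PreservesSumsOfSignsAt s (centralDiff P))
    (hc : PreservesSumsOfSignsAt s (halfSecondDiff P)) : PreservesSumsOfSignsAt (s + 1) P := by
  obtain ⟨Q₀, h₀⟩ := hP
  obtain ⟨Q₁, h₁⟩ := hb
  obtain ⟨Q₂, h₂⟩ := hc
  let ρ : MvPolynomial (Fin s) ℚ →ₐ[ℚ] MvPolynomial (Fin (s + 1)) ℚ :=
    MvPolynomial.rename Fin.succ
  have hρ : signIdeal s ≤ (signIdeal (s + 1)).comap ρ :=
    signIdeal_le_comap ρ fun i => by simpa [ρ] using X_pow_three_sub_X_mem_signIdeal i.succ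
  let π := Ideal.Quotient.mkₐ ℚ (signIdeal (s + 1))
  let x : MvPolynomial (Fin (s + 1)) ℚ := MvPolynomial.X 0
  have hx : π x ^ 3 = π x := by
    rw [← map_pow, Ideal.Quotient.mkₐ_eq_mk, Ideal.Quotient.eq]
    exact X_pow_three_sub_X_mem_signIdeal 0
  have hσ : signSum (s + 1) = ρ (signSum s) + x := by
    simp [signSum, Fin.sum_univ_succ, ρ, x, add_comm]
  refine ⟨MvPolynomial.rename Fin.succ Q₀ + MvPolynomial.rename Fin.succ Q₁ * MvPolynomial.X 0
    + MvPolynomial.rename Fin.succ Q₂ * MvPolynomial.X 0 ^ 2, Ideal.Quotient.eq.mp ?_⟩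
  rw [← Ideal.Quotient.mkₐ_eq_mk ℚ, ← aeval_algHom_apply, hσ, map_add,
    aeval_add_of_pow_three_eq_self hx, aeval_mkₐ_eq_of_mem_signIdeal hρ h₀,
    aeval_mkₐ_eq_of_mem_signIdeal hρ h₁, aeval_mkₐ_eq_of_mem_signIdeal hρ h₂]
  simp [π, ρ, x, MvPolynomial.map_rename]

lemma two_dvd_aeval_cons_one_sub_aeval_cons_neg_one {s : ℕ}
    (Q : MvPolynomial (Fin (s + 1)) ℤ) :
    2 ∣ MvPolynomial.aeval (Fin.cons (MvPolynomial.C 1) MvPolynomial.X) Q -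
      MvPolynomial.aeval (Fin.cons (MvPolynomial.C (-1)) MvPolynomial.X) Q := by
  let q : Polynomial (MvPolynomial (Fin s) ℤ) :=
    MvPolynomial.aeval (Fin.cons Polynomial.X fun i => Polynomial.C (MvPolynomial.X i)) Q
  have hq (e : ℤ) : MvPolynomial.aeval (Fin.cons (MvPolynomial.C e) MvPolynomial.X) Q =
      q.eval (MvPolynomial.C e) := by
    rw [← coe_aeval_eq_eval]
    refine AlgHom.congr_fun (MvPolynomial.algHom_ext fun i => ?_ :
      MvPolynomial.aeval (Fin.cons (MvPolynomial.C e) MvPolynomial.X) =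
        ((aeval (MvPolynomial.C e)).restrictScalars ℤ).comp (MvPolynomial.aeval _)) Q
    cases i using Fin.cases <;> simp
  obtain ⟨D, hD⟩ := sub_dvd_eval_sub (MvPolynomial.C 1) (MvPolynomial.C (-1)) q
  refine ⟨D, ?_⟩
  rw [hq, hq, hD, map_neg, map_one]
  ring

lemma aeval_cons_C_map {s : ℕ} (e : ℤ) (Q : MvPolynomial (Fin (s + 1)) ℤ) :
    MvPolynomial.aeval (Fin.cons (MvPolynomial.C (e : ℚ)) MvPolynomial.X)
        (MvPolynomial.map (Int.castRingHom ℚ) Q) =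
      MvPolynomial.map (Int.castRingHom ℚ)
        (MvPolynomial.aeval (Fin.cons (MvPolynomial.C e) MvPolynomial.X) Q) := by
  induction Q using MvPolynomial.induction_on with
  | C a => simp
  | add p q hp hq => simp only [map_add, hp, hq]
  | mul_X p i hp =>
    simp only [map_mul, MvPolynomial.map_X, MvPolynomial.aeval_X, hp]
    cases i using Fin.cases <;> simp

lemma aeval_mkₐ_signSum_add_intCast {s : ℕ} {P : ℚ[X]} {Q : MvPolynomial (Fin (s + 1)) ℤ}
    (hQ : aeval (signSum (s + 1)) P - MvPolynomial.map (Int.castRingHom ℚ) Q ∈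
      signIdeal (s + 1)) {e : ℤ} (he : e ^ 3 = e) :
    aeval (Ideal.Quotient.mkₐ ℚ (signIdeal s) (signSum s) + e) P =
      Ideal.Quotient.mkₐ ℚ (signIdeal s) (MvPolynomial.map (Int.castRingHom ℚ)
        (MvPolynomial.aeval (Fin.cons (MvPolynomial.C e) MvPolynomial.X) Q)) := by
  let φ : MvPolynomial (Fin (s + 1)) ℚ →ₐ[ℚ] MvPolynomial (Fin s) ℚ :=
    MvPolynomial.aeval (Fin.cons (MvPolynomial.C (e : ℚ)) MvPolynomial.X)
  have hφ : signIdeal (s + 1) ≤ (signIdeal s).comap φ := by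
    refine signIdeal_le_comap φ fun i => ?_
    cases i using Fin.cases with
    | zero => simp [φ, ← Int.cast_pow, he]
    | succ i => simpa [φ] using X_pow_three_sub_X_mem_signIdeal i
  have hσ : φ (signSum (s + 1)) = signSum s + e := by
    simp [φ, signSum, Fin.sum_univ_succ, add_comm]
  rw [← aeval_cons_C_map, ← aeval_mkₐ_eq_of_mem_signIdeal hφ hQ, hσ, map_add, map_intCast]

theorem PreservesSumsOfSignsAt.of_succ {s : ℕ} {P : ℚ[X]}
    (h : PreservesSumsOfSignsAt (s + 1) P) :
    PreservesSumsOfSignsAt s (centralDiff P) ∧ PreservesSumsOfSignsAt s (halfSecondDiff P) := by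
  obtain ⟨Q, hQ⟩ := h
  let π := Ideal.Quotient.mkₐ ℚ (signIdeal s)
  let ι (F : MvPolynomial (Fin s) ℤ) := π (MvPolynomial.map (Int.castRingHom ℚ) F)
  let E (e : ℤ) := MvPolynomial.aeval (Fin.cons (MvPolynomial.C e) MvPolynomial.X) Q
  have h₁ : aeval (π (signSum s) + 1) P = ι (E 1) := by
    simpa only [Int.cast_one] using aeval_mkₐ_signSum_add_intCast hQ (e := 1) (by norm_num)
  have hm : aeval (π (signSum s) - 1) P = ι (E (-1)) := by
    simpa only [Int.cast_neg, Int.cast_one, ← sub_eq_add_neg] using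
      aeval_mkₐ_signSum_add_intCast hQ (e := -1) (by norm_num)
  have h₀ : aeval (π (signSum s)) P = ι (E 0) := by
    simpa only [Int.cast_zero, add_zero] using
      aeval_mkₐ_signSum_add_intCast hQ (e := 0) (by norm_num)
  obtain ⟨D, hD⟩ := two_dvd_aeval_cons_one_sub_aeval_cons_neg_one Q
  have hD' : ι (E 1) - ι (E (-1)) = ι D + ι D := by
    simpa only [ι, map_sub, map_add, two_mul] using congrArg ι hD
  constructor
  · refine ⟨D, Ideal.Quotient.eq.mp ?_⟩
    change π _ = π _
    rw [← aeval_algHom_apply, aeval_centralDiff, h₁, hm]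
    linear_combination (norm := module) (2⁻¹ : ℚ) • hD'
  · refine ⟨E 1 - E 0 - D, Ideal.Quotient.eq.mp ?_⟩
    change π _ = π _
    rw [← aeval_algHom_apply, aeval_halfSecondDiff, h₁, hm, h₀]
    simp only [map_sub]
    linear_combination (norm := module) (-2⁻¹ : ℚ) • hD'

lemma preservesSumsOfSignsAt_of_mem_binomLattice (s : ℕ) {P : ℚ[X]} (hP : P ∈ binomLattice) :
    PreservesSumsOfSignsAt s P := by
  induction s generalizing P with
  | zero => exact preservesSumsOfSignsAt_zero_iff.mpr (exists_intCast_eq_eval_zero hP)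
  | succ s ih =>
    exact (ih hP).succ (ih (centralDiff_mem_binomLattice hP))
      (ih (halfSecondDiff_mem_binomLattice hP))

lemma PreservesSumsOfSigns.apply_binomCoeffOp {P : ℚ[X]} (hP : PreservesSumsOfSigns P) (n : ℕ) :
    PreservesSumsOfSigns (binomCoeffOp n P) := by
  have hb {R : ℚ[X]} (hR : PreservesSumsOfSigns R) : PreservesSumsOfSigns (centralDiff R) :=
    fun s => (PreservesSumsOfSignsAt.of_succ (hR (s + 1))).1
  have hc {R : ℚ[X]} (hR : PreservesSumsOfSigns R) : PreservesSumsOfSigns (halfSecondDiff R) :=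
    fun s => (PreservesSumsOfSignsAt.of_succ (hR (s + 1))).2
  rw [binomCoeffOp, Module.End.mul_apply, Module.End.pow_apply, Module.End.pow_apply]
  exact Function.Iterate.rec PreservesSumsOfSigns
    (Function.Iterate.rec PreservesSumsOfSigns hP (fun _ => hb) _) (fun _ => hc) _

lemma exists_eq_two_pow_mul_of_preservesSumsOfSigns {n : ℕ} {a : ℚ} {R : ℚ[X]}
    (hR : R ∈ degreeLT ℚ n) (hP : PreservesSumsOfSigns (a • binomPoly n + R)) :
    ∃ z : ℤ, a = 2 ^ (n / 2) * z := by
  have hR0 : binomCoeffOp n R = 0 := by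
    rw [← span_binomPoly_Iio] at hR
    refine (Submodule.span_le (p := LinearMap.ker (binomCoeffOp n))).mpr ?_ hR
    rintro _ ⟨p, hp, rfl⟩
    exact binomCoeffOp_binomPoly_of_lt hp
  obtain ⟨z, hz⟩ := preservesSumsOfSignsAt_zero_iff.mp (hP.apply_binomCoeffOp n 0)
  rw [map_add, map_smul, binomCoeffOp_binomPoly_self, hR0, add_zero, eval_smul, eval_C,
    smul_eq_mul] at hz
  exact ⟨z, by rw [← hz]; field_simp⟩

lemma mem_binomLattice_of_preservesSumsOfSigns {n : ℕ} {P : ℚ[X]} (hdeg : P ∈ degreeLT ℚ n)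
    (hP : PreservesSumsOfSigns P) : P ∈ binomLattice := by
  induction n generalizing P with
  | zero => simp_all [← span_binomPoly_Iio]
  | succ n ih =>
    rw [← span_binomPoly_Iio, Set.Iio_add_one_eq_Iic, ← Set.Iio_insert, Set.image_insert_eq,
      Submodule.mem_span_insert, span_binomPoly_Iio] at hdeg
    obtain ⟨a, R, hR, rfl⟩ := hdeg
    obtain ⟨z, rfl⟩ := exists_eq_two_pow_mul_of_preservesSumsOfSigns hR hP
    have hterm : ((2 : ℚ) ^ (n / 2) * z) • binomPoly n ∈ binomLattice := by
      rw [mul_comm, mul_smul, Int.cast_smul_eq_zsmul]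
      exact zsmul_mem (smul_binomPoly_mem_binomLattice n) z
    refine add_mem hterm (ih hR fun s => ?_)
    have h := PreservesSumsOfSignsAt.sub (hP s) (preservesSumsOfSignsAt_of_mem_binomLattice s hterm)
    rwa [add_sub_cancel_left] at h

theorem preservesSumsOfSigns_iff_binomial_expansion (P : Polynomial ℚ) :
    PreservesSumsOfSigns P ↔
      ∃ (N : ℕ) (n : ℕ → ℤ), (∀ p, (2 : ℤ) ^ (p / 2) ∣ n p) ∧
        P = ∑ p ∈ Finset.range (N + 1), (n p : ℚ) • binomPoly p := by
  rw [← mem_binomLattice_iff]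
  have hdeg : P ∈ degreeLT ℚ (P.natDegree + 1) := by
    rw [degreeLT_succ_eq_degreeLE, mem_degreeLE]
    exact degree_le_natDegree
  exact ⟨mem_binomLattice_of_preservesSumsOfSigns hdeg,
    fun hP s => preservesSumsOfSignsAt_of_mem_binomLattice s hP⟩
end

section
/- Let P ∈ ℚ[t] be a polynomial. The following are equivalent: (a) for every n ≥ 1 and every sum of signs φ : ℝ^n → ℤ, the function x ↦ P(φ(x)) takes integer values and is itself a sum of signs; (b) P = Σ_{p=0}^N n_p f_p where each n_p is an integer divisible by 2^{⌊p/2⌋}. -/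
open Polynomial

/-- A function `φ : ℝ^n → ℤ` is a sum of signs if it is a finite sum of signs of
polynomials. -/
def IsSumOfSigns {n : ℕ} (φ : (Fin n → ℝ) → ℤ) : Prop :=
  ∃ (s : ℕ) (g : Fin s → MvPolynomial (Fin n) ℝ),
    ∀ x, φ x = ∑ i : Fin s, sgn (MvPolynomial.eval x (g i))

/-!
(b) ⇒ (a): by Vandermonde, `C(φ + σ, p) = ∑ C(φ, i) C(σ, p - i)`, and for a sign `σ` the
factor `C(σ, j)` is `1`, `σ` or `(-1)^j (σ² - σ) / 2` according as `j = 0`, `j = 1` or `j ≥ 2`.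
Inducting on the number of signs, `2^⌊p/2⌋ C(φ, p)` is a sum of signs whenever `φ` is.

(a) ⇒ (b): along a line parallel to the first axis, a sum of signs `ψ` on `ℝ^(n+1)` is eventually
constant at `±∞`, and the two limits add up to `2 u`, where `u` (the signs of the leading
coefficients of even degree) is a sum of signs on `ℝ^n`. So if `ψ` only depends on the signs of the
coordinates, `2^n` divides `∑_{ε ∈ {±1}^n} ψ ε`. For `ψ = P (d + ∑ sgn xᵢ)` this says that
`2^k ∣ (T + T⁻¹)^k P (d)` for integers `d`, with `T` the unit shift. Since `T + T⁻¹ = L + 2` with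
`L = T⁻¹ Δ²`, induction on `j` gives `2^j ∣ L^j P = T^(-j) Δ^(2j) P` on `ℤ`, hence `2^⌊p/2⌋` divides
the Newton coefficient `Δ^p P (0)`, which is the coordinate of `P` on `f_p`.
-/

open Filter Asymptotics

lemma sgn_eq_sign (r : ℝ) : sgn r = SignType.sign r := by
  rcases lt_trichotomy r 0 with h | rfl | h
  · simp [sgn, h, sign_neg h]
  · simp [sgn]
  · simp [sgn, h, sign_pos h, not_lt.2 h.le]

lemma sgn_mul (a b : ℝ) : sgn (a * b) = sgn a * sgn b := by
  simp [sgn_eq_sign, sign_mul]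

lemma sgn_neg (a : ℝ) : sgn (-a) = -sgn a := by
  simp [sgn_eq_sign, Left.sign_neg]

lemma sgn_one : sgn 1 = 1 := by simp [sgn_eq_sign]

lemma one_sub_sgn_mul_self (r : ℝ) : 1 - sgn r * sgn r = if r = 0 then 1 else 0 := by
  rcases lt_trichotomy r 0 with h | rfl | h
  · simp [sgn_eq_sign, sign_neg h, h.ne]
  · simp [sgn_eq_sign]
  · simp [sgn_eq_sign, sign_pos h, h.ne']

lemma sgn_pow (r : ℝ) (d : ℕ) : sgn (r ^ d) = sgn r ^ d := by
  simp [sgn_eq_sign, sign_pow]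

def sumsOfSigns (n : ℕ) : Subring ((Fin n → ℝ) → ℤ) where
  carrier := {φ | IsSumOfSigns φ}
  zero_mem' := ⟨0, Fin.elim0, fun _ => rfl⟩
  one_mem' := ⟨1, fun _ => 1, fun x => by simp [sgn_one]⟩
  add_mem' := by
    rintro φ ψ ⟨s, g, hg⟩ ⟨t, h, hh⟩
    exact ⟨s + t, Fin.append g h, fun x => by simp [Fin.sum_univ_add, hg, hh]⟩
  neg_mem' := by
    rintro φ ⟨s, g, hg⟩
    exact ⟨s, fun i => -g i, fun x => by simp [hg, sgn_neg]⟩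
  mul_mem' := by
    rintro φ ψ ⟨s, g, hg⟩ ⟨t, h, hh⟩
    refine ⟨s * t, fun k => g (finProdFinEquiv.symm k).1 * h (finProdFinEquiv.symm k).2,
      fun x => ?_⟩
    simp only [Pi.mul_apply, hg, hh, Finset.sum_mul_sum, map_mul, sgn_mul]
    rw [← Fintype.sum_prod_type', ← finProdFinEquiv.symm.sum_comp]

lemma binomPoly_eval (p : ℕ) (a : ℚ) : (binomPoly p).eval a = Ring.choose a p := by
  rw [Ring.choose_eq_smul, binomPoly, eval_smul, ← descPochhammer_map (algebraMap ℤ ℚ),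
    eval_map_algebraMap, aeval_eq_smeval]

lemma two_mul_choose_sgn (r : ℝ) {j : ℕ} (hj : 2 ≤ j) :
    2 * Ring.choose (sgn r) j = (-1) ^ j * (sgn r * sgn r - sgn r) := by
  rcases lt_trichotomy r 0 with h | rfl | h
  · have hr : sgn r = -1 := by simp [sgn, h]
    have : ((1 : ℤ) + j - 1) = (j : ℕ) := by ring
    rw [hr, Ring.choose_neg, this, Ring.choose_natCast, Units.smul_def, Int.coe_negOnePow_natCast]
    simp [mul_comm]
  · simp [sgn, Ring.choose_zero_pos ℤ (by omega : 0 < j)]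
  · have hr : sgn r = 1 := by simp [sgn, h, not_lt.2 h.le]
    rw [hr, ← Nat.cast_one, Ring.choose_natCast, Nat.choose_eq_zero_of_lt (by omega)]
    simp

section sumsOfSigns
variable {n : ℕ}

lemma const_mem_sumsOfSigns (c : ℤ) : (fun _ => c) ∈ sumsOfSigns n :=
  intCast_mem _ c

lemma sgn_eval_mem_sumsOfSigns (g : MvPolynomial (Fin n) ℝ) :
    (fun x => sgn (MvPolynomial.eval x g)) ∈ sumsOfSigns n :=
  ⟨1, fun _ => g, fun x => by simp⟩

lemma two_pow_mul_choose_sgn_mem (g : MvPolynomial (Fin n) ℝ) {j e : ℕ} (h : 2 ≤ j → 1 ≤ e) :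
    (fun x => 2 ^ e * Ring.choose (sgn (MvPolynomial.eval x g)) j) ∈ sumsOfSigns n := by
  have hσ := sgn_eval_mem_sumsOfSigns g
  rcases lt_or_ge j 2 with hj | hj
  · interval_cases j
    · simpa [Ring.choose_zero_right] using const_mem_sumsOfSigns (2 ^ e)
    · simp only [Ring.choose_one_right]
      exact mul_mem (const_mem_sumsOfSigns (2 ^ e)) hσ
  · obtain ⟨e, rfl⟩ := Nat.exists_eq_add_of_le' (h hj)
    convert mul_mem (const_mem_sumsOfSigns (2 ^ e * (-1) ^ j))
      (sub_mem (mul_mem hσ hσ) hσ) using 1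
    funext x
    simp only [Pi.mul_apply, Pi.sub_apply, pow_succ, mul_assoc, two_mul_choose_sgn _ hj]

open Finset.HasAntidiagonal in
lemma two_pow_mul_choose_add_sgn_mem {φ : (Fin n → ℝ) → ℤ}
    (hφ : ∀ p, (fun x => 2 ^ (p / 2) * Ring.choose (φ x) p) ∈ sumsOfSigns n)
    (g : MvPolynomial (Fin n) ℝ) (p : ℕ) :
    (fun x => 2 ^ (p / 2) * Ring.choose (φ x + sgn (MvPolynomial.eval x g)) p)
      ∈ sumsOfSigns n := by
  have hsplit : (fun x => 2 ^ (p / 2) * Ring.choose (φ x + sgn (MvPolynomial.eval x g)) p) =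
      ∑ ij ∈ antidiagonal p, (fun x => 2 ^ (ij.1 / 2) * Ring.choose (φ x) ij.1) *
        (fun x => 2 ^ (p / 2 - ij.1 / 2) * Ring.choose (sgn (MvPolynomial.eval x g)) ij.2) := by
    funext x
    rw [Ring.add_choose_eq p (Commute.all _ _), Finset.mul_sum, Finset.sum_apply]
    refine Finset.sum_congr rfl fun ij hij => ?_
    have hle : ij.1 / 2 ≤ p / 2 := Nat.div_le_div_right (antidiagonal.fst_le hij)
    rw [Pi.mul_apply, ← Nat.add_sub_cancel' hle, pow_add, Nat.add_sub_cancel_left]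
    ring
  rw [hsplit]
  refine sum_mem fun ij hij => mul_mem (hφ ij.1) (two_pow_mul_choose_sgn_mem g fun hj => ?_)
  have := mem_antidiagonal.1 hij
  omega

lemma two_pow_mul_choose_mem {φ : (Fin n → ℝ) → ℤ} (hφ : IsSumOfSigns φ) (p : ℕ) :
    (fun x => 2 ^ (p / 2) * Ring.choose (φ x) p) ∈ sumsOfSigns n := by
  obtain ⟨s, g, hg⟩ := hφ
  simp_rw [hg]
  induction (Finset.univ : Finset (Fin s)) using Finset.induction_on generalizing p with
  | empty => simpa using const_mem_sumsOfSigns (2 ^ (p / 2) * Ring.choose 0 p)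
  | insert a t ha ih =>
    simp_rw [Finset.sum_insert ha, add_comm (sgn _)]
    exact two_pow_mul_choose_add_sgn_mem ih (g a) p

end sumsOfSigns

def MapsSumsOfSigns (P : ℚ[X]) : Prop :=
  ∀ n : ℕ, 1 ≤ n → ∀ φ : (Fin n → ℝ) → ℤ, IsSumOfSigns φ →
    ∃ ψ : (Fin n → ℝ) → ℤ, IsSumOfSigns ψ ∧ ∀ x, (ψ x : ℚ) = P.eval (φ x : ℚ)

lemma mapsSumsOfSigns_sum_smul_binomPoly {N : ℕ} {np : ℕ → ℤ}
    (hnp : ∀ p, (2 : ℤ) ^ (p / 2) ∣ np p) :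
    MapsSumsOfSigns (∑ p ∈ Finset.range (N + 1), (np p : ℚ) • binomPoly p) := by
  intro n _ φ hφ
  choose m hm using hnp
  refine ⟨∑ p ∈ Finset.range (N + 1), m p • fun x => 2 ^ (p / 2) * Ring.choose (φ x) p,
    sum_mem fun p _ => zsmul_mem (two_pow_mul_choose_mem hφ p) _, fun x => ?_⟩
  simp only [eval_finsetSum, eval_smul, binomPoly_eval, Finset.sum_apply, Pi.smul_apply,
    smul_eq_mul, hm, ← eq_intCast (Int.castRingHom ℚ), map_sum, map_mul, Ring.map_choose]
  simp only [eq_intCast, map_pow, Int.cast_ofNat]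
  exact Finset.sum_congr rfl fun p _ => by ring

lemma Asymptotics.IsEquivalent.eventually_sgn_eq {α : Type*} {l : Filter α} {u v : α → ℝ}
    (h : u ~[l] v) : ∀ᶠ t in l, sgn (u t) = sgn (v t) := by
  filter_upwards [h.isLittleO.bound (by norm_num : (0 : ℝ) < 1 / 2)] with t ht
  simp only [Pi.sub_apply, Real.norm_eq_abs, abs_le] at ht
  rcases lt_trichotomy (v t) 0 with hv | hv | hv
  · rw [abs_of_neg hv] at ht
    simp [sgn, hv, show u t < 0 by linarith]
  · simp only [hv, abs_zero, mul_zero] at ht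
    simp [sgn, hv, show u t = 0 by linarith]
  · rw [abs_of_pos hv] at ht
    simp [sgn, hv, show 0 < u t by linarith, not_lt.2 hv.le, show ¬ u t < 0 by linarith]

lemma Polynomial.eventually_sgn_eval_atTop (q : ℝ[X]) :
    ∀ᶠ t in atTop, sgn (q.eval t) = sgn q.leadingCoeff := by
  filter_upwards [q.isEquivalent_atTop_lead.eventually_sgn_eq, eventually_gt_atTop 0]
    with t ht htpos
  rw [ht, sgn_mul, sgn_pow, sgn_eq_sign t, sign_pos htpos]
  simp

lemma Polynomial.eventually_sgn_eval_atBot (q : ℝ[X]) :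
    ∀ᶠ t in atBot, sgn (q.eval t) = (-1) ^ q.natDegree * sgn q.leadingCoeff := by
  filter_upwards [q.isEquivalent_atBot_lead.eventually_sgn_eq, eventually_lt_atBot 0]
    with t ht htneg
  rw [ht, sgn_mul, sgn_pow, sgn_eq_sign t, sign_neg htneg]
  simp [mul_comm]

noncomputable def sgnLeadingCoeffIfEven (q : ℝ[X]) : ℤ :=
  if Even q.natDegree then sgn q.leadingCoeff else 0

lemma Polynomial.eventually_sgn_eval_add_sgn_eval_neg (q : ℝ[X]) :
    ∀ᶠ t in atTop, sgn (q.eval t) + sgn (q.eval (-t)) = 2 * sgnLeadingCoeffIfEven q := by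
  filter_upwards [q.eventually_sgn_eval_atTop,
    tendsto_neg_atTop_atBot.eventually q.eventually_sgn_eval_atBot] with t htop hbot
  rw [htop, hbot, sgnLeadingCoeffIfEven]
  rcases Nat.even_or_odd q.natDegree with h | h
  · rw [h.neg_one_pow, if_pos h]; ring
  · rw [h.neg_one_pow, if_neg (Nat.not_even_iff_odd.2 h)]; ring

-- The product over `k` is the indicator that all coefficients above `j` vanish.
lemma Polynomial.mul_sgn_leadingCoeff_eq_sum (R : ℝ[X]) {D : ℕ} (hD : R.natDegree ≤ D)
    (w : ℕ → ℤ) :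
    w R.natDegree * sgn R.leadingCoeff = ∑ j ∈ Finset.range (D + 1),
      w j * sgn (R.coeff j) * ∏ k ∈ Finset.Ioc j D, (1 - sgn (R.coeff k) * sgn (R.coeff k)) := by
  simp_rw [one_sub_sgn_mul_self, Finset.prod_boole]
  rw [Finset.sum_eq_single R.natDegree]
  · rw [if_pos fun k hk => coeff_eq_zero_of_natDegree_lt (Finset.mem_Ioc.1 hk).1,
      coeff_natDegree, mul_one]
  · intro j _ hj
    rcases hj.lt_or_gt with hlt | hgt
    · have hR : R.leadingCoeff ≠ 0 := leadingCoeff_ne_zero.2 (ne_zero_of_natDegree_gt hlt)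
      rw [if_neg fun h => hR (h _ (Finset.mem_Ioc.2 ⟨hlt, hD⟩)), mul_zero]
    · simp [coeff_eq_zero_of_natDegree_lt hgt, sgn]
  · intro h
    exact absurd (Finset.mem_range.2 (Nat.lt_succ_of_le hD)) h

section lines
variable {n : ℕ}

lemma sgnLeadingCoeffIfEven_map_eval_mem (Q : Polynomial (MvPolynomial (Fin n) ℝ)) :
    (fun y => sgnLeadingCoeffIfEven (Q.map (MvPolynomial.eval y))) ∈ sumsOfSigns n := by
  let w : ℕ → ℤ := fun j => if Even j then 1 else 0
  let σ : ℕ → (Fin n → ℝ) → ℤ := fun j y => sgn (MvPolynomial.eval y (Q.coeff j))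
  have hσ (j : ℕ) : σ j ∈ sumsOfSigns n := sgn_eval_mem_sumsOfSigns _
  convert sum_mem (t := Finset.range (Q.natDegree + 1)) fun j _ =>
    mul_mem (mul_mem (const_mem_sumsOfSigns (w j)) (hσ j)) (prod_mem (t := Finset.Ioc j Q.natDegree)
      fun k _ => sub_mem (one_mem _) (mul_mem (hσ k) (hσ k))) using 1
  have hw (R : ℝ[X]) : sgnLeadingCoeffIfEven R = w R.natDegree * sgn R.leadingCoeff := by
    simp only [sgnLeadingCoeffIfEven, w]
    split_ifs <;> ring
  funext y
  rw [hw, mul_sgn_leadingCoeff_eq_sum _ natDegree_map_le]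
  simp [σ, Finset.sum_apply, Finset.prod_apply, coeff_map]

lemma exists_mem_sumsOfSigns_eventually_add_neg {ψ : (Fin (n + 1) → ℝ) → ℤ}
    (hψ : IsSumOfSigns ψ) :
    ∃ u ∈ sumsOfSigns n, ∀ y, ∀ᶠ t in atTop, ψ (Fin.cons t y) + ψ (Fin.cons (-t) y) = 2 * u y := by
  obtain ⟨s, g, hg⟩ := hψ
  let R : Fin s → (Fin n → ℝ) → ℝ[X] :=
    fun i y => (MvPolynomial.finSuccEquiv ℝ n (g i)).map (MvPolynomial.eval y)
  refine ⟨fun y => ∑ i, sgnLeadingCoeffIfEven (R i y), ?_, fun y => ?_⟩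
  · rw [← Finset.sum_fn]
    exact sum_mem fun i _ => sgnLeadingCoeffIfEven_map_eval_mem _
  · filter_upwards [eventually_all.2 fun i => (R i y).eventually_sgn_eval_add_sgn_eval_neg]
      with t ht
    simp only [hg, MvPolynomial.eval_eq_eval_mv_eval', ← Finset.sum_add_distrib, Finset.mul_sum]
    exact Finset.sum_congr rfl fun i _ => ht i

end lines

def boolSign {R : Type*} [One R] [Neg R] (b : Bool) : R := if b then 1 else -1

lemma boolSign_true {R : Type*} [One R] [Neg R] : (boolSign true : R) = 1 := rfl

lemma boolSign_false {R : Type*} [One R] [Neg R] : (boolSign false : R) = -1 := rfl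

lemma sgn_boolSign (b : Bool) : sgn (boolSign b) = boolSign b := by
  cases b <;> simp [boolSign, sgn]

@[simp, norm_cast]
lemma Int.cast_boolSign {R : Type*} [Ring R] (b : Bool) : ((boolSign b : ℤ) : R) = boolSign b := by
  cases b <;> simp [boolSign]

lemma Fintype.sum_fin_succ_bool {M : Type*} [AddCommMonoid M] {n : ℕ}
    (f : (Fin (n + 1) → Bool) → M) :
    ∑ ε, f ε = ∑ ε : Fin n → Bool, (f (Fin.cons true ε) + f (Fin.cons false ε)) := by
  rw [← (Fin.consEquiv fun _ => Bool).sum_comp, Fintype.sum_prod_type, Fintype.sum_bool,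
    Finset.sum_add_distrib]
  rfl

theorem two_pow_dvd_sum_boolSign {n : ℕ} {ψ : (Fin n → ℝ) → ℤ} (hψ : IsSumOfSigns ψ)
    (hinv : ∀ x y, (∀ i, sgn (x i) = sgn (y i)) → ψ x = ψ y) :
    (2 : ℤ) ^ n ∣ ∑ ε : Fin n → Bool, ψ (boolSign ∘ ε) := by
  induction n with
  | zero => simp
  | succ n ih =>
    obtain ⟨u, hu, hlim⟩ := exists_mem_sumsOfSigns_eventually_add_neg hψ
    have hcons (a b : ℝ) (y y' : Fin n → ℝ) (hab : sgn a = sgn b)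
        (hy : ∀ i, sgn (y i) = sgn (y' i)) : ψ (Fin.cons a y) = ψ (Fin.cons b y') :=
      hinv _ _ (Fin.forall_fin_succ.2 ⟨hab, hy⟩)
    have hpm (y : Fin n → ℝ) : ψ (Fin.cons 1 y) + ψ (Fin.cons (-1) y) = 2 * u y := by
      obtain ⟨t, ht, htpos⟩ := ((hlim y).and (eventually_gt_atTop 0)).exists
      rw [← ht, hcons t 1 y y (by simp [sgn, htpos, not_lt.2 htpos.le]) fun _ => rfl,
        hcons (-t) (-1) y y (by simp [sgn, htpos]) fun _ => rfl]
    have huinv (y y' : Fin n → ℝ) (hy : ∀ i, sgn (y i) = sgn (y' i)) : u y = u y' := by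
      have := hpm y
      rw [hcons 1 1 y y' rfl hy, hcons (-1) (-1) y y' rfl hy, hpm y'] at this
      omega
    obtain ⟨c, hc⟩ := ih hu huinv
    refine ⟨c, ?_⟩
    rw [Fintype.sum_fin_succ_bool]
    simp only [Fin.comp_cons, boolSign_true, boolSign_false, hpm, ← Finset.mul_sum]
    rw [hc, pow_succ]
    ring

lemma AddSubgroup.two_pow_smul_mem {M : Type*} [AddCommGroup M] (D : ℕ → AddSubgroup M)
    (hD : ∀ k x, x ∈ D k → (2 : ℤ) • x ∈ D (k + 1)) {k : ℕ} {x : M} (hx : x ∈ D k) (m : ℕ) :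
    (2 : ℤ) ^ m • x ∈ D (k + m) := by
  induction m with
  | zero => simpa using hx
  | succ m ih =>
    rw [← add_assoc, pow_succ', mul_smul]
    exact hD _ _ ih

lemma Module.End.add_two_pow_apply {M : Type*} [AddCommGroup M] (L : Module.End ℤ M) (f : M)
    (k : ℕ) : ((L + 2) ^ k) f =
      (L ^ k) f + ∑ i ∈ Finset.range k, ((2 : ℤ) ^ (k - i) * k.choose i) • (L ^ i) f := by
  rw [(Commute.ofNat_right L 2).add_pow, Finset.sum_range_succ, Nat.sub_self, pow_zero, mul_one,
    Nat.choose_self, Nat.cast_one, mul_one, add_comm, LinearMap.add_apply, LinearMap.sum_apply]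
  congr 1
  refine Finset.sum_congr rfl fun i _ => ?_
  rw [← Nat.cast_ofNat, ← Nat.cast_pow, mul_assoc, ← Nat.cast_mul, Module.End.mul_apply,
    Module.End.natCast_apply, map_nsmul]
  norm_cast

theorem Module.End.pow_apply_mem_of_add_two_pow_apply_mem {M : Type*} [AddCommGroup M]
    (D : ℕ → AddSubgroup M) (hD : ∀ k x, x ∈ D k → (2 : ℤ) • x ∈ D (k + 1))
    (L : Module.End ℤ M) {f : M} (hf : ∀ k, ((L + 2) ^ k) f ∈ D k) (k : ℕ) :
    (L ^ k) f ∈ D k := by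
  induction k using Nat.strong_induction_on with
  | _ k ih =>
  have hrest : ∑ i ∈ Finset.range k, ((2 : ℤ) ^ (k - i) * k.choose i) • (L ^ i) f ∈ D k := by
    refine sum_mem fun i hi => ?_
    have hik : i + (k - i) = k := Nat.add_sub_cancel' (Finset.mem_range.1 hi).le
    rw [mul_comm, mul_smul]
    have := AddSubgroup.two_pow_smul_mem D hD (ih i (Finset.mem_range.1 hi)) (k - i)
    rw [hik] at this
    exact zsmul_mem this _
  simpa [L.add_two_pow_apply] using sub_mem (hf k) hrest

section secondDiff
variable {M G : Type*} [AddCommGroup M] [AddCommGroup G]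

variable (G) in
def secondDiff (h : M) : Module.End ℤ (M → G) where
  toFun f x := f (x + h) - 2 • f x + f (x - h)
  map_add' f g := by
    funext x
    simp only [Pi.add_apply, smul_add]
    abel
  map_smul' c f := by
    funext x
    simp only [Pi.smul_apply, RingHom.id_apply, smul_add, smul_sub, smul_comm c (2 : ℕ)]

lemma secondDiff_apply (h : M) (f : M → G) (x : M) :
    secondDiff G h f x = f (x + h) - 2 • f x + f (x - h) := rfl

lemma secondDiff_eq_fwdDiff_iter_two (h : M) (f : M → G) (x : M) :
    secondDiff G h f x = (fwdDiff h)^[2] f (x - h) := by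
  simp only [secondDiff_apply, Function.iterate_succ_apply', Function.iterate_zero_apply, fwdDiff,
    sub_add_cancel, two_nsmul]
  abel

lemma secondDiff_pow_apply (h : M) (f : M → G) (j : ℕ) (x : M) :
    (secondDiff G h ^ j) f x = (fwdDiff h)^[2 * j] f (x - j • h) := by
  induction j generalizing f x with
  | zero => simp
  | succ j ih =>
    have hsd : secondDiff G h f = fun y => (fwdDiff h)^[2] f (y + -h) := by
      funext y
      rw [secondDiff_eq_fwdDiff_iter_two, sub_eq_add_neg]
    rw [pow_succ, Module.End.mul_apply, ih, hsd, fwdDiff_iter_comp_add, mul_add, mul_one,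
      Function.iterate_add_apply, succ_nsmul, sub_add_eq_sub_sub, sub_eq_add_neg _ h]

lemma secondDiff_add_two_apply (h : M) (f : M → G) (x : M) :
    (secondDiff G h + 2) f x = f (x + h) + f (x - h) := by
  rw [LinearMap.add_apply, Module.End.ofNat_apply, Pi.add_apply, secondDiff_apply, Pi.smul_apply]
  abel

lemma secondDiff_add_two_pow_apply (h : M) (f : M → G) (k : ℕ) (x : M) :
    ((secondDiff G h + 2) ^ k) f x = ∑ ε : Fin k → Bool, f (x + ∑ i, (boolSign (ε i) : ℤ) • h) := by
  induction k generalizing x with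
  | zero => simp
  | succ k ih =>
    rw [pow_succ', Module.End.mul_apply, secondDiff_add_two_apply, ih, ih,
      Fintype.sum_fin_succ_bool, ← Finset.sum_add_distrib]
    refine Finset.sum_congr rfl fun ε _ => ?_
    rw [Fin.sum_univ_succ, Fin.sum_univ_succ]
    simp only [Fin.cons_zero, Fin.cons_succ, boolSign_true, boolSign_false, one_smul, neg_smul]
    abel_nf

end secondDiff

lemma fwdDiff_iter_apply_mem {M G : Type*} [AddCommMonoid M] [AddCommGroup G] (S : AddSubgroup G)
    {h y : M} {f : M → G} (hf : ∀ m : ℕ, f (y + m • h) ∈ S) (n : ℕ) :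
    (fwdDiff h)^[n] f y ∈ S := by
  rw [fwdDiff_iter_eq_sum_shift]
  exact sum_mem fun k _ => zsmul_mem (hf k) _

lemma Polynomial.eq_sum_fwdDiff_iter_smul_binomPoly (P : ℚ[X]) :
    P = ∑ k ∈ Finset.range (P.natDegree + 1), (fwdDiff 1)^[k] P.eval 0 • binomPoly k := by
  refine eq_of_infinite_eval_eq _ _ (Set.infinite_of_injective_forall_mem
    Nat.cast_injective fun m : ℕ => ?_)
  have hm : P.eval (m : ℚ) = ∑ k ∈ Finset.range (m + 1), m.choose k • (fwdDiff 1)^[k] P.eval 0 := by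
    simpa using shift_eq_sum_fwdDiff_iter (1 : ℚ) P.eval m 0
  simp only [Set.mem_ofPred_eq, hm, eval_finsetSum, eval_smul, binomPoly_eval, Ring.choose_natCast,
    smul_eq_mul, nsmul_eq_mul]
  have hsub {a b : ℕ} (hab : a ≤ b) (f : ℕ → ℚ) (hf : ∀ k, a < k → f k = 0) :
      ∑ k ∈ Finset.range (a + 1), f k = ∑ k ∈ Finset.range (b + 1), f k :=
    Finset.sum_subset (by simpa using hab) fun k _ hk => hf k (by simpa using hk)
  rw [hsub (Nat.le_add_right m P.natDegree), hsub (Nat.le_add_left P.natDegree m)]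
  · exact Finset.sum_congr rfl fun k _ => mul_comm _ _
  · intro k hk
    rw [fwdDiff_iter_eq_zero_of_degree_lt hk]
    simp
  · intro k hk
    simp [Nat.choose_eq_zero_of_lt hk]

def twoPowIntValued (k : ℕ) : AddSubgroup (ℚ → ℚ) where
  carrier := {f | ∀ d : ℤ, f d ∈ AddSubgroup.zmultiples ((2 : ℚ) ^ k)}
  add_mem' hf hg d := add_mem (hf d) (hg d)
  zero_mem' _ := zero_mem _
  neg_mem' hf d := neg_mem (hf d)

lemma two_zsmul_mem_twoPowIntValued {k : ℕ} {f : ℚ → ℚ} (hf : f ∈ twoPowIntValued k) :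
    (2 : ℤ) • f ∈ twoPowIntValued (k + 1) := fun d => by
  obtain ⟨z, hz⟩ := hf d
  exact ⟨z, by simp [← hz, pow_succ, mul_comm, mul_left_comm]⟩

lemma MapsSumsOfSigns.secondDiff_add_two_pow_mem {P : ℚ[X]} (hP : MapsSumsOfSigns P) (k : ℕ) :
    ((secondDiff ℚ (1 : ℚ) + 2) ^ k) P.eval ∈ twoPowIntValued k := by
  intro d
  rcases Nat.eq_zero_or_pos k with rfl | hk
  · obtain ⟨ψ, -, hψ⟩ := hP 1 le_rfl (fun _ => d) (const_mem_sumsOfSigns d)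
    exact ⟨ψ 0, by simp [hψ]⟩
  let φ : (Fin k → ℝ) → ℤ := fun x => d + ∑ i, sgn (x i)
  have hφ : φ ∈ sumsOfSigns k := by
    have hsum : (∑ i, fun x : Fin k → ℝ => sgn (MvPolynomial.eval x (MvPolynomial.X i)))
        ∈ sumsOfSigns k := sum_mem fun i _ => sgn_eval_mem_sumsOfSigns _
    convert add_mem (const_mem_sumsOfSigns d) hsum using 1
    funext x
    simp [φ, Finset.sum_apply]
  obtain ⟨ψ, hψ, hψφ⟩ := hP k hk φ hφ
  have hinv (x y : Fin k → ℝ) (hxy : ∀ i, sgn (x i) = sgn (y i)) : ψ x = ψ y :=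
    Int.cast_injective (α := ℚ) <| by simp only [hψφ, φ, hxy]
  obtain ⟨c, hc⟩ := two_pow_dvd_sum_boolSign hψ hinv
  refine ⟨c, ?_⟩
  rw [secondDiff_add_two_pow_apply]
  have := congrArg (Int.cast : ℤ → ℚ) hc
  push_cast at this
  simp only [hψφ, φ, Function.comp_apply, sgn_boolSign] at this
  push_cast at this
  simp only [zsmul_eq_mul, Int.cast_boolSign, mul_one]
  rw [this, mul_comm]

theorem MapsSumsOfSigns.exists_binomPoly_expansion {P : ℚ[X]} (hP : MapsSumsOfSigns P) :
    ∃ (N : ℕ) (np : ℕ → ℤ), (∀ p, (2 : ℤ) ^ (p / 2) ∣ np p) ∧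
      P = ∑ p ∈ Finset.range (N + 1), (np p : ℚ) • binomPoly p := by
  have hsd (j : ℕ) : (secondDiff ℚ (1 : ℚ) ^ j) P.eval ∈ twoPowIntValued j :=
    Module.End.pow_apply_mem_of_add_two_pow_apply_mem twoPowIntValued
      (fun _ _ => two_zsmul_mem_twoPowIntValued) _ hP.secondDiff_add_two_pow_mem j
  have hdiff (q j : ℕ) :
      (fwdDiff (1 : ℚ))^[q + 2 * j] P.eval 0 ∈ AddSubgroup.zmultiples ((2 : ℚ) ^ j) := by
    rw [Function.iterate_add_apply]
    refine fwdDiff_iter_apply_mem (AddSubgroup.zmultiples ((2 : ℚ) ^ j)) (fun m => ?_) q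
    have := hsd j (m + j : ℤ)
    rw [secondDiff_pow_apply] at this
    simpa using this
  have hcoeff (p : ℕ) :
      (fwdDiff (1 : ℚ))^[p] P.eval 0 ∈ AddSubgroup.zmultiples ((2 : ℚ) ^ (p / 2)) := by
    simpa [Nat.mod_add_div] using hdiff (p % 2) (p / 2)
  choose z hz using fun p => AddSubgroup.mem_zmultiples_iff.1 (hcoeff p)
  refine ⟨P.natDegree, fun p => z p * 2 ^ (p / 2), fun p => dvd_mul_left _ _, ?_⟩
  conv_lhs => rw [P.eq_sum_fwdDiff_iter_smul_binomPoly]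
  refine Finset.sum_congr rfl fun p _ => ?_
  rw [← hz p]
  push_cast
  rw [zsmul_eq_mul]

theorem polynomial_operator_on_sums_of_signs_iff (P : Polynomial ℚ) :
    (∀ n : ℕ, 1 ≤ n → ∀ φ : (Fin n → ℝ) → ℤ, IsSumOfSigns φ →
      ∃ ψ : (Fin n → ℝ) → ℤ, IsSumOfSigns ψ ∧ ∀ x, (ψ x : ℚ) = P.eval ((φ x : ℚ))) ↔
    (∃ (N : ℕ) (np : ℕ → ℤ), (∀ p, (2 : ℤ) ^ (p / 2) ∣ np p) ∧
      P = ∑ p ∈ Finset.range (N + 1), (np p : ℚ) • binomPoly p) := by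
  refine ⟨MapsSumsOfSigns.exists_binomPoly_expansion, ?_⟩
  rintro ⟨N, np, hnp, rfl⟩
  exact mapsSumsOfSigns_sum_smul_binomPoly hnp
end

section
/- For every s ≥ 0, the polynomial ½((X_1 + ⋯ + X_s)^4 − (X_1 + ⋯ + X_s)^2) ∈ ℚ[X_1, …, X_s] is congruent, modulo the ideal generated by X_i^3 − X_i (i = 1, …, s), to a polynomial with integer coefficients. -/
open MvPolynomial

theorem half_pow4_sub_pow2_integral_mod_signs_ideal (s : ℕ) :
    ∃ Q : MvPolynomial (Fin s) ℤ,
      MvPolynomial.C ((1 : ℚ) / 2) *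
          ((∑ i : Fin s, MvPolynomial.X i) ^ 4 - (∑ i : Fin s, MvPolynomial.X i) ^ 2)
        - MvPolynomial.map (Int.castRingHom ℚ) Q ∈
      Ideal.span (Set.range fun i : Fin s => MvPolynomial.X i ^ 3 - MvPolynomial.X i) := by
  set Iℤ : Ideal (MvPolynomial (Fin s) ℤ) :=
    Ideal.span (Set.range fun i : Fin s => X i ^ 3 - X i) with hIℤ
  set f : MvPolynomial (Fin s) ℤ →+* MvPolynomial (Fin s) (ZMod 2) :=
    MvPolynomial.map (Int.castRingHom (ZMod 2)) with hf
  have hfsurj : Function.Surjective f :=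
    MvPolynomial.map_surjective _ (fun x => ⟨x.val, by simp⟩)
  set P : MvPolynomial (Fin s) ℤ := (∑ i : Fin s, X i) ^ 4 - (∑ i : Fin s, X i) ^ 2 with hP
  -- image of P lies in the mapped ideal
  have hmem2 : f P ∈ Ideal.map f Iℤ := by
    have h2 : (f P : MvPolynomial (Fin s) (ZMod 2)) =
        ∑ i : Fin s, X i * (X i ^ 3 - X i) := by
      have hchar : (2 : ℕ).Prime := Nat.prime_two
      simp only [hP, hf, map_sub, map_pow, map_sum, MvPolynomial.map_X]
      have hs2 : (∑ i : Fin s, (X i : MvPolynomial (Fin s) (ZMod 2))) ^ 2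
          = ∑ i : Fin s, X i ^ 2 := sum_pow_char 2 _ _
      have hs4 : (∑ i : Fin s, (X i : MvPolynomial (Fin s) (ZMod 2))) ^ 4
          = ∑ i : Fin s, X i ^ 4 := by
        rw [show 4 = 2 * 2 by norm_num, pow_mul, hs2, sum_pow_char,
          ← Finset.sum_congr rfl fun i _ => (pow_mul (X i) 2 2)]
      rw [hs2, hs4, ← Finset.sum_sub_distrib]
      exact Finset.sum_congr rfl fun i _ => by ring
    rw [h2]
    refine Ideal.sum_mem _ fun i _ => Ideal.mul_mem_left _ _ ?_
    have hm := Ideal.mem_map_of_mem f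
      (show X i ^ 3 - X i ∈ Iℤ from Ideal.subset_span ⟨i, rfl⟩)
    simpa [hf] using hm
  have hker : RingHom.ker f = Ideal.span {(2 : MvPolynomial (Fin s) ℤ)} := by
    rw [hf, MvPolynomial.ker_map, ZMod.ker_intCastRingHom, Ideal.map_span]
    norm_num
  have hmemsup : P ∈ Iℤ ⊔ RingHom.ker f := by
    have hc := Ideal.comap_map_of_surjective f hfsurj Iℤ
    have : P ∈ Ideal.comap f (Ideal.map f Iℤ) := Ideal.mem_comap.mpr hmem2
    rw [hc] at this
    rwa [RingHom.ker_eq_comap_bot] at *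
  obtain ⟨y, hy, z, hz, hyz⟩ := Submodule.mem_sup.mp hmemsup
  rw [hker] at hz
  obtain ⟨Q, hQ⟩ := Ideal.mem_span_singleton'.mp hz
  refine ⟨Q, ?_⟩
  set g : MvPolynomial (Fin s) ℤ →+* MvPolynomial (Fin s) ℚ :=
    MvPolynomial.map (Int.castRingHom ℚ) with hg
  have hmapP : g P = (∑ i : Fin s, X i) ^ 4 - (∑ i : Fin s, X i) ^ 2 := by
    simp [hP, hg]
  have h2 : (C ((1 : ℚ)/2) * 2 : MvPolynomial (Fin s) ℚ) = 1 := by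
    rw [mul_two, ← C_add]
    norm_num
  have heq : C ((1 : ℚ)/2) * ((∑ i : Fin s, X i) ^ 4 - (∑ i : Fin s, X i) ^ 2)
      - g Q = C ((1 : ℚ)/2) * g y := by
    rw [← hmapP, ← hyz, ← hQ]
    push_cast [map_add, map_mul, map_ofNat]
    linear_combination (g Q) * h2
  rw [heq]
  refine Ideal.mul_mem_left _ _ ?_
  have hle : Ideal.map g Iℤ ≤
      Ideal.span (Set.range fun i : Fin s => (X i : MvPolynomial (Fin s) ℚ) ^ 3 - X i) := by
    rw [hIℤ, Ideal.map_span]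
    refine Ideal.span_le.mpr ?_
    rintro _ ⟨_, ⟨i, rfl⟩, rfl⟩
    simpa [hg] using Ideal.subset_span (Set.mem_range_self (f := fun i : Fin s =>
      (X i : MvPolynomial (Fin s) ℚ) ^ 3 - X i) i)
  exact hle (Ideal.mem_map_of_mem g hy)
end

section
/- For every p ≥ 0, the polynomial 2^{⌊p/2⌋} f_p(t) ∈ ℚ[t] preserves formal sums of signs. -/
open Polynomial

namespace SignsAux

open Finset

lemma binomPoly_zero : binomPoly 0 = 1 := by
  simp [binomPoly, descPochhammer_zero]

lemma binomPoly_one : binomPoly 1 = X := by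
  simp [binomPoly, descPochhammer_one]

lemma binomPoly_eval_nat (p n : ℕ) : (binomPoly p).eval (n : ℚ) = n.choose p := by
  rw [binomPoly, eval_smul, smul_eq_mul, descPochhammer_eval_eq_descFactorial,
    Nat.descFactorial_eq_factorial_mul_choose]
  push_cast
  rw [← mul_assoc, inv_mul_cancel₀ (by exact_mod_cast p.factorial_ne_zero), one_mul]

lemma nat_vdm (p m n : ℕ) :
    (m + n).choose p = ∑ j ∈ range (p + 1), m.choose (p - j) * n.choose j := by
  rw [Nat.add_choose_eq, Finset.Nat.sum_antidiagonal_eq_sum_range_succ_mk]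
  rw [← Finset.sum_range_reflect]
  refine Finset.sum_congr rfl fun j hj => ?_
  simp only [Finset.mem_range] at hj
  have h1 : p + 1 - 1 - j = p - j := by omega
  have h2 : p - (p - j) = j := by omega
  rw [h1, h2]

/-- A polynomial over `ℚ` vanishing at all naturals is zero. -/
lemma eq_zero_of_nat_roots (P : ℚ[X]) (h : ∀ n : ℕ, P.eval (n : ℚ) = 0) : P = 0 := by
  apply Polynomial.eq_zero_of_infinite_isRoot
  apply Set.Infinite.mono (s := Set.range (Nat.cast : ℕ → ℚ))
  · rintro _ ⟨n, rfl⟩; exact h n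
  · exact Set.infinite_range_of_injective Nat.cast_injective

lemma q_vdm_nat (p n : ℕ) (x : ℚ) :
    (binomPoly p).eval (x + n) =
      ∑ j ∈ range (p + 1), (binomPoly (p - j)).eval x * (binomPoly j).eval (n : ℚ) := by
  have key : (binomPoly p).comp (X + C (n : ℚ)) -
      ∑ j ∈ range (p + 1), binomPoly (p - j) * C ((binomPoly j).eval (n : ℚ)) = 0 := by
    apply eq_zero_of_nat_roots
    intro m
    simp only [eval_sub, eval_comp, eval_add, eval_X, eval_C, eval_finset_sum, eval_mul]
    rw [show ((m : ℚ) + n) = (((m + n : ℕ) : ℚ)) by push_cast; ring, binomPoly_eval_nat]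
    rw [sub_eq_zero, nat_vdm p m n]
    push_cast
    exact Finset.sum_congr rfl fun j _ => by rw [binomPoly_eval_nat, binomPoly_eval_nat]
  have := congrArg (Polynomial.eval x) key
  simp only [eval_sub, eval_comp, eval_add, eval_X, eval_C, eval_finset_sum, eval_mul,
    eval_zero, sub_eq_zero] at this
  exact this

lemma q_vdm (p : ℕ) (x y : ℚ) :
    (binomPoly p).eval (x + y) =
      ∑ j ∈ range (p + 1), (binomPoly (p - j)).eval x * (binomPoly j).eval y := by
  have key : (binomPoly p).comp (C x + X) -
      ∑ j ∈ range (p + 1), C ((binomPoly (p - j)).eval x) * binomPoly j = 0 := by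
    apply eq_zero_of_nat_roots
    intro n
    simp only [eval_sub, eval_comp, eval_add, eval_X, eval_C, eval_finset_sum, eval_mul]
    rw [sub_eq_zero, q_vdm_nat p n x]
  have := congrArg (Polynomial.eval y) key
  simp only [eval_sub, eval_comp, eval_add, eval_X, eval_C, eval_finset_sum, eval_mul,
    eval_zero, sub_eq_zero] at this
  exact this

lemma mv_vdm (p : ℕ) :
    Polynomial.aeval (MvPolynomial.X 0 + MvPolynomial.X 1 : MvPolynomial (Fin 2) ℚ) (binomPoly p)
      = ∑ j ∈ range (p + 1),
          Polynomial.aeval (MvPolynomial.X (0 : Fin 2) : MvPolynomial (Fin 2) ℚ)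
              (binomPoly (p - j)) *
            Polynomial.aeval (MvPolynomial.X (1 : Fin 2) : MvPolynomial (Fin 2) ℚ)
              (binomPoly j) := by
  apply MvPolynomial.funext
  intro v
  have hc : ∀ (f : ℚ[X]) (g : MvPolynomial (Fin 2) ℚ),
      MvPolynomial.eval v (Polynomial.aeval g f) = Polynomial.eval (MvPolynomial.eval v g) f := by
    intro f g
    rw [show MvPolynomial.eval v = RingHomClass.toRingHom (MvPolynomial.aeval (R := ℚ) v) from
      (MvPolynomial.coe_aeval_eq_eval v).symm]
    simp only [RingHom.coe_coe]
    rw [← Polynomial.aeval_algHom_apply]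
    simp [Polynomial.aeval_def, Polynomial.eval₂_eq_eval_map, Polynomial.map_id,
      Algebra.algebraMap_self]
  rw [map_sum, hc]
  simp only [map_mul, hc, map_add, MvPolynomial.eval_X]
  exact q_vdm p (v 0) (v 1)

lemma aeval_add_binomPoly {B : Type*} [CommRing B] [Algebra ℚ B] (a b : B) (p : ℕ) :
    Polynomial.aeval (a + b) (binomPoly p)
      = ∑ j ∈ range (p + 1),
          Polynomial.aeval a (binomPoly (p - j)) * Polynomial.aeval b (binomPoly j) := by
  have h := congrArg (MvPolynomial.aeval (R := ℚ) ![a, b]) (mv_vdm p)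
  rw [← Polynomial.aeval_algHom_apply, map_sum] at h
  simp only [← Polynomial.aeval_algHom_apply, map_mul, map_add, MvPolynomial.aeval_X,
    Matrix.cons_val_zero, Matrix.cons_val_one, Matrix.head_cons] at h
  exact h

lemma aeval_descPochhammer_cube {B : Type*} [CommRing B] [Algebra ℚ B] {b : B}
    (hb : b ^ 3 = b) :
    ∀ j, 2 ≤ j →
      Polynomial.aeval b (descPochhammer ℚ j)
        = ((-1 : ℚ) ^ j * (j.factorial : ℚ) / 2) • (b ^ 2 - b) := by
  intro j hj
  induction j with
  | zero => omega
  | succ j ih =>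
    have hw : ∀ k : ℕ, (b ^ 2 - b) * (b - (k : B)) = (-(1 + (k : ℚ))) • (b ^ 2 - b) := by
      intro k
      have hcast : (-(1 + (k : ℚ))) • (b ^ 2 - b) = (-(1 + (k : B))) * (b ^ 2 - b) := by
        rw [Algebra.smul_def, map_neg, map_add, map_one, map_natCast]
      rw [hcast]
      linear_combination hb
    rcases Nat.lt_or_ge j 2 with h | h
    · interval_cases j
      · omega
      · -- j + 1 = 2
        have hsc : ((-1 : ℚ) ^ (1 + 1) * ((1 + 1).factorial : ℚ) / 2) = 1 := by
          norm_num [Nat.factorial]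
        rw [descPochhammer_succ_right, descPochhammer_one, map_mul, map_sub,
          Polynomial.aeval_X, Polynomial.aeval_natCast, hsc, one_smul, Nat.cast_one]
        ring
    · rw [descPochhammer_succ_right, map_mul, ih h, map_sub, Polynomial.aeval_X,
        Polynomial.aeval_natCast, smul_mul_assoc, hw j, smul_smul]
      congr 1
      rw [Nat.factorial_succ]
      push_cast
      ring

lemma aeval_binomPoly_cube {B : Type*} [CommRing B] [Algebra ℚ B] {b : B}
    (hb : b ^ 3 = b) {j : ℕ} (hj : 2 ≤ j) :
    Polynomial.aeval b (binomPoly j) = ((-1 : ℚ) ^ j / 2) • (b ^ 2 - b) := by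
  rw [binomPoly, map_smul, aeval_descPochhammer_cube hb j hj, smul_smul]
  congr 1
  have h0 : (j.factorial : ℚ) ≠ 0 := by exact_mod_cast j.factorial_ne_zero
  field_simp

lemma two_pow_smul_mem {B : Type*} [CommRing B] [Algebra ℚ B] (S : Subring B) {w : B}
    (hw : w ∈ S) (k : ℕ) : ((2 : ℚ) ^ k) • w ∈ S := by
  rw [show ((2 : ℚ) ^ k) = (((2 ^ k : ℕ) : ℚ)) by push_cast; ring,
    Nat.cast_smul_eq_nsmul]
  exact nsmul_mem hw _

lemma key {B : Type*} [CommRing B] [Algebra ℚ B] :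
    ∀ (s : ℕ) (x : Fin s → B), (∀ i, x i ^ 3 = x i) → ∀ p : ℕ,
      ((2 : ℚ) ^ (p / 2)) • Polynomial.aeval (∑ i, x i) (binomPoly p)
        ∈ Subring.closure (Set.range x) := by
  intro s
  induction s with
  | zero =>
    intro x hx p
    rw [show (∑ i : Fin 0, x i) = 0 from rfl]
    cases p with
    | zero =>
      rw [binomPoly_zero]
      simpa using one_mem (Subring.closure (Set.range x))
    | succ p =>
      have h0 : Polynomial.aeval (0 : B) (binomPoly (p + 1)) = 0 := by
        rw [binomPoly, map_smul, Polynomial.aeval_def, Polynomial.eval₂_at_zero,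
          Polynomial.coeff_zero_eq_eval_zero, descPochhammer_eval_zero]
        simp
      rw [h0, smul_zero]
      exact zero_mem _
  | succ s IH =>
    intro x hx p
    set S := Subring.closure (Set.range x) with hS
    have hb : x (Fin.last s) ∈ S := Subring.subset_closure ⟨_, rfl⟩
    set b := x (Fin.last s) with hbdef
    set x' : Fin s → B := x ∘ Fin.castSucc with hx'def
    have hsub : Subring.closure (Set.range x') ≤ S :=
      Subring.closure_mono (by rintro _ ⟨i, rfl⟩; exact ⟨i.castSucc, rfl⟩)
    have IH' : ∀ q : ℕ,
        ((2 : ℚ) ^ (q / 2)) • Polynomial.aeval (∑ i, x' i) (binomPoly q) ∈ S :=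
      fun q => hsub (IH x' (fun i => hx _) q)
    set a := ∑ i : Fin s, x' i with hadef
    have hsum : (∑ i : Fin (s + 1), x i) = a + b := by
      rw [Fin.sum_univ_castSucc]; rfl
    rw [hsum, aeval_add_binomPoly, Finset.smul_sum]
    apply sum_mem
    intro j hj
    rw [Finset.mem_range] at hj
    match j, hj with
    | 0, _ =>
      rw [binomPoly_zero, map_one, mul_one, Nat.sub_zero]
      exact IH' p
    | 1, hj =>
      rw [binomPoly_one, Polynomial.aeval_X]
      obtain ⟨d, hd⟩ : ∃ d, p / 2 = d + (p - 1) / 2 :=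
        ⟨p / 2 - (p - 1) / 2, by omega⟩
      have heq : ((2 : ℚ) ^ (p / 2)) • (Polynomial.aeval a (binomPoly (p - 1)) * b)
          = ((2 : ℚ) ^ d) •
            ((((2 : ℚ) ^ ((p - 1) / 2)) • Polynomial.aeval a (binomPoly (p - 1))) * b) := by
        rw [hd, pow_add, mul_smul, smul_mul_assoc]
      rw [heq]
      exact two_pow_smul_mem S (S.mul_mem (IH' (p - 1)) hb) d
    | (j + 2), hj =>
      rw [aeval_binomPoly_cube (hx _) (by omega : 2 ≤ j + 2)]
      obtain ⟨d, hd⟩ : ∃ d, p / 2 = d + (p - (j + 2)) / 2 + 1 :=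
        ⟨p / 2 - (p - (j + 2)) / 2 - 1, by omega⟩
      have heq : ((2 : ℚ) ^ (p / 2)) •
            (Polynomial.aeval a (binomPoly (p - (j + 2))) *
              (((-1 : ℚ) ^ (j + 2) / 2) • (b ^ 2 - b)))
          = ((-1 : ℚ) ^ (j + 2)) • (((2 : ℚ) ^ d) •
              ((((2 : ℚ) ^ ((p - (j + 2)) / 2)) •
                  Polynomial.aeval a (binomPoly (p - (j + 2)))) * (b ^ 2 - b))) := by
        simp only [mul_smul_comm, smul_mul_assoc, smul_smul]
        congr 1
        rw [hd]
        ring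
      rw [heq]
      have hm1 : (((2 : ℚ) ^ ((p - (j + 2)) / 2)) •
          Polynomial.aeval a (binomPoly (p - (j + 2)))) * (b ^ 2 - b) ∈ S :=
        S.mul_mem (IH' _) (S.sub_mem (S.pow_mem hb 2) hb)
      have hm2 := two_pow_smul_mem S hm1 d
      rw [show ((-1 : ℚ) ^ (j + 2)) = ((((-1 : ℤ) ^ (j + 2) : ℤ)) : ℚ) by push_cast; ring,
        Int.cast_smul_eq_zsmul]
      exact zsmul_mem hm2 _

end SignsAux

theorem two_pow_half_p_mul_binomPoly_preservesSumsOfSigns (p : ℕ) :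
    PreservesSumsOfSigns (((2 : ℚ) ^ (p / 2)) • binomPoly p) := by
  intro s
  set I : Ideal (MvPolynomial (Fin s) ℚ) :=
    Ideal.span (Set.range fun i : Fin s => MvPolynomial.X i ^ 3 - MvPolynomial.X i) with hI
  set π : MvPolynomial (Fin s) ℚ →ₐ[ℚ] MvPolynomial (Fin s) ℚ ⧸ I :=
    Ideal.Quotient.mkₐ ℚ I with hπ
  have hx : ∀ i : Fin s, (π (MvPolynomial.X i)) ^ 3 = π (MvPolynomial.X i) := by
    intro i
    have h0 : π ((MvPolynomial.X i) ^ 3 - MvPolynomial.X i) = 0 := by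
      rw [hπ, Ideal.Quotient.mkₐ_eq_mk]
      exact Ideal.Quotient.eq_zero_iff_mem.mpr (Ideal.subset_span ⟨i, rfl⟩)
    rw [map_sub, map_pow, sub_eq_zero] at h0
    exact h0
  have hmem := SignsAux.key s (fun i => π (MvPolynomial.X i)) hx p
  have hle : Subring.closure (Set.range fun i => π (MvPolynomial.X i)) ≤
      RingHom.range ((π : MvPolynomial (Fin s) ℚ →+* MvPolynomial (Fin s) ℚ ⧸ I).comp
        (MvPolynomial.map (Int.castRingHom ℚ))) := by
    rw [Subring.closure_le]
    rintro _ ⟨i, rfl⟩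
    exact ⟨MvPolynomial.X i, by simp [MvPolynomial.map_X]⟩
  obtain ⟨Q, hQ⟩ := hle hmem
  refine ⟨Q, ?_⟩
  have hz : π (Polynomial.aeval (∑ i : Fin s, MvPolynomial.X i)
      (((2 : ℚ) ^ (p / 2)) • binomPoly p) - MvPolynomial.map (Int.castRingHom ℚ) Q) = 0 := by
    rw [map_sub]
    have h1 : π (Polynomial.aeval (∑ i : Fin s, MvPolynomial.X i)
          (((2 : ℚ) ^ (p / 2)) • binomPoly p))
        = ((2 : ℚ) ^ (p / 2)) •
            Polynomial.aeval (∑ i : Fin s, π (MvPolynomial.X i)) (binomPoly p) := by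
      rw [map_smul, map_smul, ← Polynomial.aeval_algHom_apply, map_sum]
    have h2 : π (MvPolynomial.map (Int.castRingHom ℚ) Q)
        = ((2 : ℚ) ^ (p / 2)) •
            Polynomial.aeval (∑ i : Fin s, π (MvPolynomial.X i)) (binomPoly p) := hQ
    rw [h1, h2, sub_self]
  rw [hπ, Ideal.Quotient.mkₐ_eq_mk] at hz
  exact Ideal.Quotient.eq_zero_iff_mem.mp hz
end
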